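/- Let ε > 0 be fixed, let p = n^(−4/11+ε), and let n be sufficiently large in terms of ε. Let G be an n-vertex graph such that: (i) every vertex v satisfies deg_G(v) = (1 ± n^(−0.2)) n p; (ii) all distinct vertices u,v satisfy codeg_G(u,v) = (1 ± n^(−0.1)) n p², where codeg_G(u,v) is the number of common neighbors of u and v; (iii) for all distinct u,v the number of (u,v)-bowties satisfies |B_{u,v}| = (1 ± n^(−0.02)) n⁵ p¹⁰; and (iv) for every triangle T of G, the number of tuples (u,v,a_1,a_2,b_1,b_2,c) with u ≠ v and (a_1,a_2,b_1,b_2,c) a (u,v)-bowtie such that T ∈ {{u,a_1,a_2},{c,b_1,b_2},{c,a_1,a_2},{v,b_1,b_2}} is at most 48 n⁴ p⁷. Then there exists a vertex-balanced function φ_0 : T(G) → ℝ such that every triangle T of G satisfies φ_0(T) = (1 ± n^(−ε/6)) · (n p²)^(−1). -/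

import Mathlib

/-!
Give every triangle the same weight `c = ∑ deg / ∑_v 2|T_v|`, where `T_v` is the set of
triangles at `v`. Since `2|T_v| = ∑_{u ∼ v} codeg(u, v) = (1 ± δ) deg(v) np²` by (ii), `c` is
`(1 ± 2δ)(np²)⁻¹`, and the defect `d(v) = deg(v)/2 - c|T_v|` is at most `O(δ np)` and sums to
zero. To cancel it, note that the signed sum `𝟙{u a₁ a₂} + 𝟙{c b₁ b₂} - 𝟙{c a₁ a₂} - 𝟙{v b₁ b₂}`
of the four triangles of a `(u,v)`-bowtie raises the weight at `u` by one, lowers it at `v` by one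
and leaves every other vertex unchanged. Spreading `d(u)/n` evenly over the `(u,v)`-bowties for
all `u ≠ v` therefore removes the defect, and by (iii) and (iv) it changes each triangle weight by
only `O(δ)(np²)⁻¹`. For `ε > 1/2` condition (i) would force degrees above `n`.
-/

open Finset

/-- `x = (1 ± δ) y`. -/
def approxEq (x δ y : ℝ) : Prop := (1 - δ) * y ≤ x ∧ x ≤ (1 + δ) * y

/-- `(a₁, a₂, b₁, b₂, c)` is a `(u,v)`-bowtie in `G`: the seven vertices are distinct and
the ten listed pairs are edges of `G`. -/
def IsBowtie {V : Type*} (G : SimpleGraph V) (u v a₁ a₂ b₁ b₂ c : V) : Prop :=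
  ([u, v, a₁, a₂, b₁, b₂, c] : List V).Nodup ∧
    G.Adj u a₁ ∧ G.Adj u a₂ ∧ G.Adj a₁ a₂ ∧ G.Adj a₁ c ∧ G.Adj a₂ c ∧
    G.Adj v b₁ ∧ G.Adj v b₂ ∧ G.Adj b₁ b₂ ∧ G.Adj b₁ c ∧ G.Adj b₂ c

/-- The number of `(u,v)`-bowties of `G`. -/
noncomputable def bowtieCount {V : Type*} (G : SimpleGraph V) (u v : V) : ℕ :=
  {x : V × V × V × V × V |
    IsBowtie G u v x.1 x.2.1 x.2.2.1 x.2.2.2.1 x.2.2.2.2}.ncard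

/-- The number of bowties `(u, v, a₁, a₂, b₁, b₂, c)` one of whose four triangles
is the triangle `t`. -/
noncomputable def bowtiesOnTriangle {V : Type*} [DecidableEq V] (G : SimpleGraph V)
    (t : Finset V) : ℕ :=
  {x : V × V × V × V × V × V × V |
    IsBowtie G x.1 x.2.1 x.2.2.1 x.2.2.2.1 x.2.2.2.2.1 x.2.2.2.2.2.1 x.2.2.2.2.2.2 ∧
      (t = {x.1, x.2.2.1, x.2.2.2.1} ∨
        t = {x.2.2.2.2.2.2, x.2.2.2.2.1, x.2.2.2.2.2.1} ∨
        t = {x.2.2.2.2.2.2, x.2.2.1, x.2.2.2.1} ∨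
        t = {x.2.1, x.2.2.2.2.1, x.2.2.2.2.2.1})}.ncard

open scoped Classical in
/-- The set of triangles of `G`, as a `Finset` of 3-element vertex sets. -/
noncomputable def triangleFinset {V : Type*} [Fintype V] (G : SimpleGraph V) :
    Finset (Finset V) :=
  Finset.univ.filter fun t => G.IsNClique 3 t

section approxEq

variable {x δ y : ℝ}

theorem approxEq_iff_abs_sub_le : approxEq x δ y ↔ |x - y| ≤ δ * y := by
  rw [approxEq, abs_sub_le_iff]
  constructor <;> rintro ⟨h₁, h₂⟩ <;> constructor <;> linarith

theorem approxEq_sum {ι : Type*} (s : Finset ι) {x y : ι → ℝ}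
    (h : ∀ i ∈ s, approxEq (x i) δ (y i)) :
    approxEq (∑ i ∈ s, x i) δ (∑ i ∈ s, y i) := by
  rw [approxEq, mul_sum, mul_sum]
  exact ⟨sum_le_sum fun i hi => (h i hi).1, sum_le_sum fun i hi => (h i hi).2⟩

theorem approxEq_sum_div_sum {ι : Type*} (s : Finset ι) {a b : ι → ℝ} {B : ℝ}
    (hB : 0 < B) (hδ₀ : 0 ≤ δ) (hδ : δ ≤ 1 / 3) (hb₀ : ∀ i ∈ s, 0 ≤ b i)
    (hb : 0 < ∑ i ∈ s, b i) (h : ∀ i ∈ s, approxEq (a i) δ (B * b i)) :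
    0 < ∑ i ∈ s, a i ∧ approxEq ((∑ i ∈ s, b i) / ∑ i ∈ s, a i) (2 * δ) B⁻¹ ∧
      ∀ i ∈ s, |b i - (∑ i ∈ s, b i) / (∑ i ∈ s, a i) * a i| ≤ 3 * δ * b i := by
  set S := ∑ i ∈ s, b i
  set T := ∑ i ∈ s, a i
  obtain ⟨hT₁, hT₂⟩ : approxEq T δ (∑ i ∈ s, B * b i) := approxEq_sum s h
  rw [← mul_sum] at hT₁ hT₂
  have hT : 0 < T := lt_of_lt_of_le (by nlinarith) hT₁
  set c := S / T
  have hc : 0 ≤ c := div_nonneg hb.le hT.le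
  have hcT : c * T = S := div_mul_cancel₀ S hT.ne'
  have hr₁ : 1 ≤ c * B * (1 + δ) := by
    nlinarith [mul_le_mul_of_nonneg_left hT₂ hc]
  have hr₂ : c * B * (1 - δ) ≤ 1 := by
    nlinarith [mul_le_mul_of_nonneg_left hT₁ hc]
  have hr : c * B ≤ 3 / 2 := by nlinarith
  refine ⟨hT, ⟨?_, ?_⟩, fun i hi => ?_⟩
  · rw [← div_eq_mul_inv, div_le_iff₀ hB]; nlinarith
  · rw [← div_eq_mul_inv, le_div_iff₀ hB]; nlinarith
  · obtain ⟨ha₁, ha₂⟩ := h i hi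
    have hbi := hb₀ i hi
    have h₁ := mul_le_mul_of_nonneg_left ha₁ hc
    have h₂ := mul_le_mul_of_nonneg_left ha₂ hc
    have h₃ : 0 ≤ (c * B * (1 - δ) - (1 - 3 * δ)) * b i := mul_nonneg (by nlinarith) hbi
    have h₄ : 0 ≤ (1 + 3 * δ - c * B * (1 + δ)) * b i := mul_nonneg (by nlinarith) hbi
    rw [abs_le]
    constructor <;> nlinarith

end approxEq

theorem ite_mem_insert_sub_ite_mem_insert {α : Type*} [DecidableEq α] {s : Finset α}
    {x y : α} (hx : x ∉ s) (hy : y ∉ s) (w : α) :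
    ((if w ∈ insert x s then 1 else 0) - if w ∈ insert y s then 1 else 0 : ℝ) =
      (if w = x then 1 else 0) - if w = y then 1 else 0 := by
  by_cases hw : w ∈ s
  · simp [hw, ne_of_mem_of_not_mem hw hx, ne_of_mem_of_not_mem hw hy]
  · simp [hw]

open Filter Topology in
theorem eventually_mul_rpow_le_rpow (C : ℝ) {a b : ℝ} (hab : b < a) :
    ∀ᶠ n : ℕ in atTop, C * (n : ℝ) ^ b ≤ (n : ℝ) ^ a := by
  have h : Tendsto (fun n : ℕ => C * (n : ℝ) ^ (b - a)) atTop (𝓝 0) := by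
    have := ((tendsto_rpow_neg_atTop (sub_pos.2 hab)).comp tendsto_natCast_atTop_atTop).const_mul C
    simpa using this
  filter_upwards [h.eventually (ge_mem_nhds one_pos), eventually_gt_atTop 0] with n hC hn
  have hn' : (0 : ℝ) < n := Nat.cast_pos.2 hn
  calc C * (n : ℝ) ^ b = C * (n : ℝ) ^ (b - a) * (n : ℝ) ^ a := by
        rw [mul_assoc, ← Real.rpow_add hn', sub_add_cancel]
    _ ≤ (n : ℝ) ^ a := by
        have := Real.rpow_pos_of_pos hn' a
        nlinarith

namespace SimpleGraph

section Shift

variable {V : Type*} [DecidableEq V]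

def bowtieShift (u v : V) : V × V × V × V × V → Finset V → ℝ
  | (a₁, a₂, b₁, b₂, c), t =>
    (if t = {u, a₁, a₂} then 1 else 0) + (if t = {c, b₁, b₂} then 1 else 0) -
      (if t = {c, a₁, a₂} then 1 else 0) - if t = {v, b₁, b₂} then 1 else 0

theorem abs_bowtieShift_le (u v : V) (β : V × V × V × V × V) (t : Finset V) :
    |bowtieShift u v β t| ≤ 2 * if t = {u, β.1, β.2.1} ∨ t = {β.2.2.2.2, β.2.2.1, β.2.2.2.1} ∨
      t = {β.2.2.2.2, β.1, β.2.1} ∨ t = {v, β.2.2.1, β.2.2.2.1} then 1 else 0 := by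
  obtain ⟨a₁, a₂, b₁, b₂, c⟩ := β
  simp only [bowtieShift]
  by_cases h : t = {u, a₁, a₂} ∨ t = {c, b₁, b₂} ∨ t = {c, a₁, a₂} ∨ t = {v, b₁, b₂}
  · rw [if_pos h, abs_le]
    constructor <;> split_ifs <;> norm_num
  · simp only [not_or] at h
    simp [h.1, h.2.1, h.2.2.1, h.2.2.2]

end Shift

variable {V : Type*} [Fintype V] (G : SimpleGraph V)

@[simp]
theorem mem_triangleFinset {t : Finset V} : t ∈ triangleFinset G ↔ G.IsNClique 3 t := by
  simp [triangleFinset]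

theorem ncard_neighborSet_eq_degree [DecidableRel G.Adj] (v : V) :
    (G.neighborSet v).ncard = G.degree v := by
  rw [← Nat.card_coe_set_eq, Nat.card_eq_fintype_card, card_neighborSet_eq_degree]

theorem not_approxEq_ncard_neighborSet {δ p : ℝ} (hδ : δ ≤ 1 / 2) (hp : 2 ≤ p) (v : V) :
    ¬ approxEq ((G.neighborSet v).ncard : ℝ) δ (Fintype.card V * p) := by
  classical
  intro h
  have hlt : ((G.neighborSet v).ncard : ℝ) < Fintype.card V := by
    rw [ncard_neighborSet_eq_degree]
    exact_mod_cast G.degree_lt_card_verts v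
  have hV : (0 : ℝ) ≤ Fintype.card V := Nat.cast_nonneg _
  have h₁ := mul_le_mul_of_nonneg_right (show 1 / 2 ≤ 1 - δ by linarith)
    (mul_nonneg hV (by linarith : (0 : ℝ) ≤ p))
  nlinarith [h.1, mul_le_mul_of_nonneg_left hp hV]

open scoped Classical in
noncomputable def bowtieFinset (u v : V) : Finset (V × V × V × V × V) :=
  univ.filter fun β => IsBowtie G u v β.1 β.2.1 β.2.2.1 β.2.2.2.1 β.2.2.2.2

@[simp]
theorem mem_bowtieFinset {u v : V} {β : V × V × V × V × V} :
    β ∈ G.bowtieFinset u v ↔ IsBowtie G u v β.1 β.2.1 β.2.2.1 β.2.2.2.1 β.2.2.2.2 := by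
  simp [bowtieFinset]

theorem card_bowtieFinset (u v : V) : #(G.bowtieFinset u v) = bowtieCount G u v := by
  rw [bowtieCount, ← Set.ncard_coe_finset]
  congr
  ext
  simp

theorem ne_of_mem_bowtieFinset {u v : V} {β : V × V × V × V × V}
    (h : β ∈ G.bowtieFinset u v) : u ≠ v := by
  rw [mem_bowtieFinset] at h
  exact List.rel_of_pairwise_cons h.1 (by simp)

variable [DecidableEq V]

theorem card_triangleFinset_filter_mem_mem {u v : V} (huv : G.Adj u v) :
    #{t ∈ triangleFinset G | u ∈ t ∧ v ∈ t} = (G.commonNeighbors u v).ncard := by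
  classical
  rw [Set.ncard_eq_toFinset_card']
  symm
  refine card_nbij (fun w => {u, v, w}) (fun w hw => ?_) (fun w hw w' hw' hww' => ?_)
    (fun t ht => ?_)
  · simp only [mem_coe, Set.mem_toFinset, mem_commonNeighbors] at hw
    simpa using is3Clique_triple_iff.2 ⟨huv, hw.1, hw.2⟩
  · simp only [mem_coe, Set.mem_toFinset, mem_commonNeighbors] at hw hw'
    have : w ∈ ({u, v, w'} : Finset V) := by simp only at hww'; simp [← hww']
    simpa [hw.1.ne', hw.2.ne'] using this
  · simp only [coe_filter, mem_triangleFinset] at ht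
    obtain ⟨ht, hu, hv⟩ := ht
    obtain ⟨w, hwt, hw⟩ := exists_mem_notMem_of_card_lt_card
      (show #{u, v} < #t by rw [ht.card_eq, card_pair huv.ne]; norm_num)
    simp only [mem_insert, mem_singleton, not_or] at hw
    refine ⟨w, ?_, eq_of_subset_of_card_le ?_ ?_⟩
    · simp only [mem_coe, Set.mem_toFinset, mem_commonNeighbors]
      exact ⟨ht.1 hu hwt (Ne.symm hw.1), ht.1 hv hwt (Ne.symm hw.2)⟩
    · simp [insert_subset_iff, hu, hv, hwt]
    · rw [ht.card_eq, card_insert_of_notMem (by simp [huv.ne, Ne.symm hw.1]),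
        card_pair (Ne.symm hw.2)]

theorem two_mul_card_triangleFinset_filter_mem [DecidableRel G.Adj] (v : V) :
    2 * #{t ∈ triangleFinset G | v ∈ t} =
      ∑ u ∈ G.neighborFinset v, (G.commonNeighbors u v).ncard := by
  have hcount := sum_card_bipartiteAbove_eq_sum_card_bipartiteBelow
    (s := G.neighborFinset v) (t := {t ∈ triangleFinset G | v ∈ t}) (r := fun u t => u ∈ t)
  simp only [bipartiteAbove, bipartiteBelow, filter_filter] at hcount
  calc 2 * #{t ∈ triangleFinset G | v ∈ t}
      = ∑ t ∈ triangleFinset G with v ∈ t, #{u ∈ G.neighborFinset v | u ∈ t} := by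
        rw [mul_comm, ← smul_eq_mul, ← sum_const]
        refine sum_congr rfl fun t ht => ?_
        obtain ⟨ht, hv⟩ := mem_filter.1 ht
        rw [mem_triangleFinset] at ht
        have : {u ∈ G.neighborFinset v | u ∈ t} = t.erase v := by
          ext u
          simp only [mem_filter, mem_neighborFinset, mem_erase]
          exact ⟨fun h => ⟨h.1.ne', h.2⟩, fun h => ⟨ht.1 hv h.2 (Ne.symm h.1), h.2⟩⟩
        rw [this, card_erase_of_mem hv, ht.card_eq]
    _ = ∑ u ∈ G.neighborFinset v, #{t ∈ triangleFinset G | u ∈ t ∧ v ∈ t} := by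
        rw [← hcount]
        simp_rw [and_comm]
    _ = ∑ u ∈ G.neighborFinset v, (G.commonNeighbors u v).ncard :=
        sum_congr rfl fun u hu =>
          G.card_triangleFinset_filter_mem_mem ((mem_neighborFinset _ _ _).1 hu).symm

theorem approxEq_two_mul_card_triangleFinset_filter_mem {δ B : ℝ}
    (h : ∀ u v, G.Adj u v → approxEq (G.commonNeighbors u v).ncard δ B) (v : V) :
    approxEq (2 * #{t ∈ triangleFinset G | v ∈ t}) δ (B * (G.neighborSet v).ncard) := by
  classical
  have hsum := approxEq_sum (G.neighborFinset v) fun u hu =>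
    h u v ((mem_neighborFinset _ _ _).1 hu).symm
  rw [sum_const, nsmul_eq_mul, ← Nat.cast_sum, ← two_mul_card_triangleFinset_filter_mem] at hsum
  rwa [ncard_neighborSet_eq_degree, ← card_neighborFinset_eq_degree, mul_comm B, ← Nat.cast_ofNat,
    ← Nat.cast_mul]

theorem sum_bowtieShift {u v a₁ a₂ b₁ b₂ c : V} (h : IsBowtie G u v a₁ a₂ b₁ b₂ c) (w : V) :
    ∑ t ∈ triangleFinset G with w ∈ t, bowtieShift u v (a₁, a₂, b₁, b₂, c) t =
      (if w = u then 1 else 0) - if w = v then 1 else 0 := by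
  obtain ⟨-, hua₁, hua₂, ha, ha₁c, ha₂c, hvb₁, hvb₂, hb, hb₁c, hb₂c⟩ := h
  have hsum : ∀ τ, G.IsNClique 3 τ →
      ∑ t ∈ triangleFinset G with w ∈ t, (if t = τ then 1 else 0 : ℝ) = if w ∈ τ then 1 else 0 := by
    intro τ hτ
    simp [sum_ite_eq', hτ]
  simp only [bowtieShift, sum_add_distrib, sum_sub_distrib,
    hsum _ (is3Clique_triple_iff.2 ⟨hua₁, hua₂, ha⟩),
    hsum _ (is3Clique_triple_iff.2 ⟨ha₁c.symm, ha₂c.symm, ha⟩),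
    hsum _ (is3Clique_triple_iff.2 ⟨hb₁c.symm, hb₂c.symm, hb⟩),
    hsum _ (is3Clique_triple_iff.2 ⟨hvb₁, hvb₂, hb⟩)]
  have hu := ite_mem_insert_sub_ite_mem_insert (s := {a₁, a₂}) (x := u) (y := c)
    (by simp [hua₁.ne, hua₂.ne]) (by simp [ha₁c.ne', ha₂c.ne']) w
  have hv := ite_mem_insert_sub_ite_mem_insert (s := {b₁, b₂}) (x := c) (y := v)
    (by simp [hb₁c.ne', hb₂c.ne']) (by simp [hvb₁.ne, hvb₂.ne]) w
  linarith

noncomputable def bowtieCorrection (x : V → V → ℝ) (t : Finset V) : ℝ :=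
  ∑ u, ∑ v, ∑ β ∈ G.bowtieFinset u v, x u v / #(G.bowtieFinset u v) * bowtieShift u v β t

theorem sum_bowtieCorrection (hB : ∀ u v, u ≠ v → (G.bowtieFinset u v).Nonempty)
    (x : V → V → ℝ) (w : V) :
    ∑ t ∈ triangleFinset G with w ∈ t, G.bowtieCorrection x t = ∑ v, x w v - ∑ u, x u w := by
  have hβ : ∀ u v, ∑ β ∈ G.bowtieFinset u v, x u v / #(G.bowtieFinset u v) *
      ∑ t ∈ triangleFinset G with w ∈ t, bowtieShift u v β t =
        x u v * ((if w = u then 1 else 0) - if w = v then 1 else 0) := by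
    intro u v
    by_cases huv : u = v
    · subst huv
      rw [sum_eq_zero fun β hβ => (G.ne_of_mem_bowtieFinset hβ rfl).elim]
      simp
    rw [sum_congr rfl fun β hβ => by rw [G.sum_bowtieShift (G.mem_bowtieFinset.1 hβ)],
      sum_const, nsmul_eq_mul]
    field_simp [(hB u v huv).card_pos.ne']
  calc ∑ t ∈ triangleFinset G with w ∈ t, G.bowtieCorrection x t
      = ∑ u, ∑ v, ∑ β ∈ G.bowtieFinset u v, x u v / #(G.bowtieFinset u v) *
          ∑ t ∈ triangleFinset G with w ∈ t, bowtieShift u v β t := by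
        simp only [bowtieCorrection, mul_sum]
        rw [sum_comm]
        refine sum_congr rfl fun u _ => ?_
        rw [sum_comm]
        exact sum_congr rfl fun v _ => sum_comm
    _ = ∑ v, x w v - ∑ u, x u w := by
        simp [hβ, mul_sub, sum_sub_distrib, mul_ite]

theorem bowtiesOnTriangle_eq_sum (t : Finset V) :
    bowtiesOnTriangle G t = ∑ u, ∑ v, #{β ∈ G.bowtieFinset u v |
      t = {u, β.1, β.2.1} ∨ t = {β.2.2.2.2, β.2.2.1, β.2.2.2.1} ∨
        t = {β.2.2.2.2, β.1, β.2.1} ∨ t = {v, β.2.2.1, β.2.2.2.1}} := by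
  classical
  rw [bowtiesOnTriangle, Set.ncard_eq_toFinset_card', Set.toFinset_ofPred, card_filter]
  simp_rw [bowtieFinset, filter_filter, card_filter, Fintype.sum_prod_type]

theorem abs_bowtieCorrection_le {x : V → V → ℝ} {X M : ℝ} (hX : ∀ u v, |x u v| ≤ X)
    (hM : 0 < M) (hB : ∀ u v, u ≠ v → M ≤ #(G.bowtieFinset u v)) (t : Finset V) :
    |G.bowtieCorrection x t| ≤ 2 * X / M * bowtiesOnTriangle G t := by
  rw [bowtiesOnTriangle_eq_sum]
  push_cast
  simp only [bowtieCorrection, mul_sum]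
  refine (abs_sum_le_sum_abs _ _).trans <| sum_le_sum fun u _ =>
    (abs_sum_le_sum_abs _ _).trans <| sum_le_sum fun v _ =>
      (abs_sum_le_sum_abs _ _).trans ?_
  calc ∑ β ∈ G.bowtieFinset u v, |x u v / #(G.bowtieFinset u v) * bowtieShift u v β t|
      ≤ ∑ β ∈ G.bowtieFinset u v, X / M * (2 * if t = {u, β.1, β.2.1} ∨
          t = {β.2.2.2.2, β.2.2.1, β.2.2.2.1} ∨ t = {β.2.2.2.2, β.1, β.2.1} ∨
          t = {v, β.2.2.1, β.2.2.2.1} then 1 else 0) := by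
        refine sum_le_sum fun β hβ => ?_
        have hX₀ : 0 ≤ X := (abs_nonneg _).trans (hX u v)
        rw [abs_mul, abs_div, Nat.abs_cast]
        exact mul_le_mul (div_le_div₀ hX₀ (hX u v) hM (hB u v (G.ne_of_mem_bowtieFinset hβ)))
          (abs_bowtieShift_le u v β t) (abs_nonneg _) (div_nonneg hX₀ hM.le)
    _ = 2 * X / M * #{β ∈ G.bowtieFinset u v | t = {u, β.1, β.2.1} ∨
          t = {β.2.2.2.2, β.2.2.1, β.2.2.2.1} ∨ t = {β.2.2.2.2, β.1, β.2.1} ∨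
          t = {v, β.2.2.1, β.2.2.2.1}} := by
        rw [← mul_sum, ← mul_sum, sum_boole]
        ring

def IsVertexBalanced (φ : Finset V → ℝ) : Prop :=
  ∀ v, ∑ t ∈ triangleFinset G with v ∈ t, φ t = (G.neighborSet v).ncard / 2

theorem exists_uniform_triangle_weight {δ B : ℝ} (hB : 0 < B) (hδ₀ : 0 ≤ δ) (hδ : δ ≤ 1 / 3)
    (hdeg_pos : ∃ v, 0 < (G.neighborSet v).ncard)
    (hcodeg : ∀ u v, G.Adj u v → approxEq (G.commonNeighbors u v).ncard δ B) :
    ∃ c, approxEq c (2 * δ) B⁻¹ ∧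
      ∑ v, (((G.neighborSet v).ncard : ℝ) / 2 - c * #{t ∈ triangleFinset G | v ∈ t}) = 0 ∧
      ∀ v, |((G.neighborSet v).ncard : ℝ) / 2 - c * #{t ∈ triangleFinset G | v ∈ t}| ≤
        3 / 2 * δ * (G.neighborSet v).ncard := by
  obtain ⟨v₀, hv₀⟩ := hdeg_pos
  set deg : V → ℝ := fun v => (G.neighborSet v).ncard
  set tri : V → ℝ := fun v => #{t ∈ triangleFinset G | v ∈ t}
  have hdeg₀ : ∀ v, 0 ≤ deg v := fun v => Nat.cast_nonneg _
  obtain ⟨htri_pos, hc, hdefect⟩ := approxEq_sum_div_sum univ (a := fun v => 2 * tri v) hB hδ₀ hδ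
    (fun v _ => hdeg₀ v) (sum_pos' (fun v _ => hdeg₀ v) ⟨v₀, mem_univ _, by simpa [deg]⟩)
    fun v _ => G.approxEq_two_mul_card_triangleFinset_filter_mem hcodeg v
  set c := (∑ v, deg v) / ∑ v, 2 * tri v
  refine ⟨c, hc, ?_, fun v => ?_⟩
  · have h : c * ∑ v, 2 * tri v = ∑ v, deg v := div_mul_cancel₀ _ htri_pos.ne'
    rw [← mul_sum] at h
    simp only [sum_sub_distrib, ← sum_div, ← mul_sum]
    linarith
  · have h := hdefect v (mem_univ v)
    rw [show deg v / 2 - c * tri v = (deg v - c * (2 * tri v)) / 2 by ring, abs_div, abs_two]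
    linarith

theorem exists_isVertexBalanced_abs_sub_inv_le {δ B D M K : ℝ} (hB : 0 < B) (hδ₀ : 0 ≤ δ)
    (hδ : δ ≤ 1 / 3) (hM : 0 < M) (hdeg_pos : ∃ v, 0 < (G.neighborSet v).ncard)
    (hdeg : ∀ v, ((G.neighborSet v).ncard : ℝ) ≤ D)
    (hcodeg : ∀ u v, G.Adj u v → approxEq (G.commonNeighbors u v).ncard δ B)
    (hbowtie : ∀ u v, u ≠ v → M ≤ bowtieCount G u v)
    (htri : ∀ t ∈ triangleFinset G, bowtiesOnTriangle G t ≤ K) :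
    ∃ φ, G.IsVertexBalanced φ ∧ ∀ t ∈ triangleFinset G,
      |φ t - B⁻¹| ≤ 2 * δ * B⁻¹ + 3 * δ * D * K / (Fintype.card V * M) := by
  obtain ⟨c, hc, hd_sum, hd⟩ := G.exists_uniform_triangle_weight hB hδ₀ hδ hdeg_pos hcodeg
  obtain ⟨v₀, -⟩ := hdeg_pos
  set d : V → ℝ := fun v => ((G.neighborSet v).ncard : ℝ) / 2 - c * #{t ∈ triangleFinset G | v ∈ t}
  have hdD : ∀ v, |d v| ≤ 3 / 2 * δ * D := fun v =>
    (hd v).trans (mul_le_mul_of_nonneg_left (hdeg v) (by positivity))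
  have hn : (0 : ℝ) < Fintype.card V := Nat.cast_pos.2 (Fintype.card_pos_iff.2 ⟨v₀⟩)
  -- the net outflow `∑ v, x w v - ∑ u, x u w` of `x` at `w` is `d w - (∑ u, d u) / |V| = d w`
  set x : V → V → ℝ := fun u _ => d u / Fintype.card V
  have hB : ∀ u v, u ≠ v → M ≤ #(G.bowtieFinset u v) := fun u v huv => by
    simpa [card_bowtieFinset] using hbowtie u v huv
  refine ⟨fun t => c + G.bowtieCorrection x t, fun v => ?_, fun t ht => ?_⟩
  · rw [sum_add_distrib, sum_const, nsmul_eq_mul, G.sum_bowtieCorrection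
      (fun u v huv => card_pos.1 (Nat.cast_pos.1 (hM.trans_le (hB u v huv))))]
    simp only [x, ← sum_div, hd_sum, sum_const, card_univ, nsmul_eq_mul]
    field_simp
    ring
  · have hcorr := G.abs_bowtieCorrection_le (x := x) (X := 3 / 2 * δ * D / Fintype.card V)
      (fun u _ => by rw [abs_div, Nat.abs_cast]; exact div_le_div_of_nonneg_right (hdD u) hn.le)
      hM hB t
    have hK := htri t ht
    calc |c + G.bowtieCorrection x t - B⁻¹| ≤ |c - B⁻¹| + |G.bowtieCorrection x t| := by
          rw [add_sub_right_comm]; exact abs_add_le _ _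
      _ ≤ 2 * δ * B⁻¹ + 2 * (3 / 2 * δ * D / Fintype.card V) / M * K := by
          gcongr
          · exact (approxEq_iff_abs_sub_le.1 hc)
          · have hD : 0 ≤ D := (Nat.cast_nonneg _).trans (hdeg v₀)
            exact hcorr.trans (mul_le_mul_of_nonneg_left hK (by positivity))
      _ = 2 * δ * B⁻¹ + 3 * δ * D * K / (Fintype.card V * M) := by
          field_simp

theorem exists_isVertexBalanced_approxEq {n : ℕ} (hV : Fintype.card V = n) (hn : 0 < n)
    {p δ₁ δ₂ δ₃ η : ℝ} (hp : 0 < p) (hδ₁ : δ₁ ≤ 1 / 2) (hδ₂₀ : 0 ≤ δ₂) (hδ₂ : δ₂ ≤ 1 / 3)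
    (hδ₃ : δ₃ ≤ 1 / 2) (hη : 578 * δ₂ ≤ η)
    (hi : ∀ v, approxEq ((G.neighborSet v).ncard : ℝ) δ₁ (n * p))
    (hii : ∀ u v, u ≠ v →
      approxEq ((G.neighborSet u ∩ G.neighborSet v).ncard : ℝ) δ₂ (n * p ^ 2))
    (hiii : ∀ u v, u ≠ v → approxEq (bowtieCount G u v : ℝ) δ₃ (n ^ 5 * p ^ 10))
    (hiv : ∀ t, G.IsNClique 3 t → (bowtiesOnTriangle G t : ℝ) ≤ 48 * n ^ 4 * p ^ 7) :
    ∃ φ, G.IsVertexBalanced φ ∧ ∀ t ∈ triangleFinset G, approxEq (φ t) η (n * p ^ 2)⁻¹ := by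
  have hn₀ : (0 : ℝ) < n := Nat.cast_pos.2 hn
  obtain ⟨v₀⟩ : Nonempty V := Fintype.card_pos_iff.1 (hV ▸ hn)
  have hdeg_pos : ∃ v, 0 < (G.neighborSet v).ncard :=
    ⟨v₀, Nat.cast_pos.1 <| lt_of_lt_of_le (by nlinarith [mul_pos hn₀ hp]) (hi v₀).1⟩
  have hdeg : ∀ v, ((G.neighborSet v).ncard : ℝ) ≤ 2 * (n * p) := fun v =>
    (hi v).2.trans (by nlinarith [mul_pos hn₀ hp])
  have hbowtie : ∀ u v, u ≠ v → n ^ 5 * p ^ 10 / 2 ≤ (bowtieCount G u v : ℝ) := by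
    intro u v huv
    have := mul_le_mul_of_nonneg_right hδ₃ (by positivity : (0 : ℝ) ≤ n ^ 5 * p ^ 10)
    exact le_trans (by nlinarith) (hiii u v huv).1
  obtain ⟨φ, hφ, hbound⟩ := G.exists_isVertexBalanced_abs_sub_inv_le (by positivity) hδ₂₀ hδ₂
    (by positivity) hdeg_pos hdeg (fun u v h => hii u v h.ne) hbowtie
    (fun t ht => hiv t ((mem_triangleFinset G).1 ht))
  refine ⟨φ, hφ, fun t ht => approxEq_iff_abs_sub_le.2 ?_⟩
  calc |φ t - (n * p ^ 2)⁻¹|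
      ≤ 2 * δ₂ * (n * p ^ 2)⁻¹ +
          3 * δ₂ * (2 * (n * p)) * (48 * n ^ 4 * p ^ 7) / (Fintype.card V * (n ^ 5 * p ^ 10 / 2)) :=
        hbound t ht
    _ = 578 * δ₂ * (n * p ^ 2)⁻¹ := by
        rw [hV]
        field_simp
        ring
    _ ≤ η * (n * p ^ 2)⁻¹ := by gcongr

end SimpleGraph

open scoped Classical in
theorem exists_vertex_balanced_weighting_general (ε : ℝ) :
    ∃ N : ℕ, ∀ n : ℕ, N ≤ n → ∀ G : SimpleGraph (Fin n),
      (∀ v : Fin n,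
        approxEq ((G.neighborSet v).ncard : ℝ) ((n : ℝ) ^ (-(0.2 : ℝ)))
          ((n : ℝ) * (n : ℝ) ^ (-(4 : ℝ) / 11 + ε))) →
      (∀ u v : Fin n, u ≠ v →
        approxEq ((G.neighborSet u ∩ G.neighborSet v).ncard : ℝ) ((n : ℝ) ^ (-(0.1 : ℝ)))
          ((n : ℝ) * ((n : ℝ) ^ (-(4 : ℝ) / 11 + ε)) ^ (2 : ℕ))) →
      (∀ u v : Fin n, u ≠ v →
        approxEq (bowtieCount G u v : ℝ) ((n : ℝ) ^ (-(0.02 : ℝ)))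
          ((n : ℝ) ^ (5 : ℕ) * ((n : ℝ) ^ (-(4 : ℝ) / 11 + ε)) ^ (10 : ℕ))) →
      (∀ t : Finset (Fin n), G.IsNClique 3 t →
        (bowtiesOnTriangle G t : ℝ) ≤
          48 * (n : ℝ) ^ (4 : ℕ) * ((n : ℝ) ^ (-(4 : ℝ) / 11 + ε)) ^ (7 : ℕ)) →
      ∃ φ₀ : Finset (Fin n) → ℝ,
        (∀ v : Fin n,
          ∑ t ∈ (triangleFinset G).filter (fun t => v ∈ t), φ₀ t
            = ((G.neighborSet v).ncard : ℝ) / 2) ∧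
        ∀ t ∈ triangleFinset G,
          approxEq (φ₀ t) ((n : ℝ) ^ (-ε / 6))
            (((n : ℝ) * ((n : ℝ) ^ (-(4 : ℝ) / 11 + ε)) ^ (2 : ℕ))⁻¹) := by
  rcases le_or_gt ε (1 / 2) with hε | hε
  · obtain ⟨N, hN⟩ := Filter.eventually_atTop.1 <| (Filter.eventually_ge_atTop 1).and <|
      (eventually_mul_rpow_le_rpow 2 (by norm_num : -(0.2 : ℝ) < 0)).and <|
      (eventually_mul_rpow_le_rpow 3 (by norm_num : -(0.1 : ℝ) < 0)).and <|
      (eventually_mul_rpow_le_rpow 2 (by norm_num : -(0.02 : ℝ) < 0)).and <|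
      eventually_mul_rpow_le_rpow 578 (by linarith : -(0.1 : ℝ) < -ε / 6)
    refine ⟨N, fun n hN' G hi hii hiii hiv => ?_⟩
    obtain ⟨hn, h₁, h₂, h₃, hη⟩ := hN n hN'
    simp only [Real.rpow_zero] at h₁ h₂ h₃
    exact G.exists_isVertexBalanced_approxEq (Fintype.card_fin n) hn
      (Real.rpow_pos_of_pos (by exact_mod_cast hn) _) (by linarith) (by positivity) (by linarith)
      (by linarith) hη hi hii hiii hiv
  · obtain ⟨N, hN⟩ := Filter.eventually_atTop.1 <| (Filter.eventually_ge_atTop 1).and <|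
      (eventually_mul_rpow_le_rpow 2 (by norm_num : -(0.2 : ℝ) < 0)).and <|
      eventually_mul_rpow_le_rpow 2 (by linarith : (0 : ℝ) < -4 / 11 + ε)
    refine ⟨N, fun n hN' G hi _ _ _ => ?_⟩
    obtain ⟨hn, h₁, hp⟩ := hN n hN'
    simp only [Real.rpow_zero] at h₁ hp
    refine (G.not_approxEq_ncard_neighborSet (δ := (n : ℝ) ^ (-(0.2 : ℝ)))
      (p := (n : ℝ) ^ (-(4 : ℝ) / 11 + ε)) (by linarith) (by linarith) ⟨0, hn⟩ ?_).elim
    rw [Fintype.card_fin]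
    exact hi ⟨0, hn⟩

open scoped Classical in
/-- Under properties (i)–(iv) below of an `n`-vertex graph `G`
(with `p = n^(−4/11+ε)` and `n` large in terms of `ε`), `G` supports a vertex-balanced
triangle weighting `φ₀` with `φ₀(T) = (1 ± n^(−ε/6)) (n p²)⁻¹` for every triangle `T`. -/
theorem exists_vertex_balanced_weighting (ε : ℝ) (hε : 0 < ε) :
    ∃ N : ℕ, ∀ n : ℕ, N ≤ n → ∀ G : SimpleGraph (Fin n),
      (∀ v : Fin n,
        approxEq ((G.neighborSet v).ncard : ℝ) ((n : ℝ) ^ (-(0.2 : ℝ)))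
          ((n : ℝ) * (n : ℝ) ^ (-(4 : ℝ) / 11 + ε))) →
      (∀ u v : Fin n, u ≠ v →
        approxEq ((G.neighborSet u ∩ G.neighborSet v).ncard : ℝ) ((n : ℝ) ^ (-(0.1 : ℝ)))
          ((n : ℝ) * ((n : ℝ) ^ (-(4 : ℝ) / 11 + ε)) ^ (2 : ℕ))) →
      (∀ u v : Fin n, u ≠ v →
        approxEq (bowtieCount G u v : ℝ) ((n : ℝ) ^ (-(0.02 : ℝ)))
          ((n : ℝ) ^ (5 : ℕ) * ((n : ℝ) ^ (-(4 : ℝ) / 11 + ε)) ^ (10 : ℕ))) →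
      (∀ t : Finset (Fin n), G.IsNClique 3 t →
        (bowtiesOnTriangle G t : ℝ) ≤
          48 * (n : ℝ) ^ (4 : ℕ) * ((n : ℝ) ^ (-(4 : ℝ) / 11 + ε)) ^ (7 : ℕ)) →
      ∃ φ₀ : Finset (Fin n) → ℝ,
        (∀ v : Fin n,
          ∑ t ∈ (triangleFinset G).filter (fun t => v ∈ t), φ₀ t
            = ((G.neighborSet v).ncard : ℝ) / 2) ∧
        ∀ t ∈ triangleFinset G,
          approxEq (φ₀ t) ((n : ℝ) ^ (-ε / 6))
            (((n : ℝ) * ((n : ℝ) ^ (-(4 : ℝ) / 11 + ε)) ^ (2 : ℕ))⁻¹) :=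
  exists_vertex_balanced_weighting_general ε
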